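/- arXiv:2503.06867 — 3 statements merged into one kernel-verified Lean document; each statement's English description precedes it below -/
import Mathlib

section
/- Let Φ: ℝ → ℝ be an l-Lipschitz function and let H be a set of functions from a set X to ℝ. Then the empirical Rademacher complexity of the composed class Φ ∘ H = {Φ ∘ h : h ∈ H} over a sample (x₁,...,x_m) satisfies R̂(Φ ∘ H) ≤ l · R̂(H), where R̂(H) = E_σ[ sup_{h∈H} (1/m) Σᵢ σᵢ h(xᵢ) ] and the σᵢ are independent Rademacher (±1 uniform) random variables. -/
/-!
Replace `Φ` by `l • id` one sample coordinate `k` at a time. Pairing each sign vector with the one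
that differs from it only at `k`, each step reduces to
`sup_t (u t + Φ (v t)) + sup_t (u t - Φ (v t)) ≤ sup_t (u t + l v t) + sup_t (u t - l v t)`,
which holds termwise: for a pair `s, t`, `Φ (v s) - Φ (v t) ≤ l |v s - v t|`, and according to the
sign of `v s - v t` the pair is dominated by `(s, t)` or by `(t, s)` on the right.
The suprema of all the intermediate classes are finite because the sample vectors form a bounded
set: one-sided bounds on all signed sums bound every coordinate, as `2 a k` is the sum of two
signed sums.
-/

open Finset

/-- Empirical Rademacher complexity of a class `H` over sample `x`. -/
noncomputable def Rhat {X : Type*} (m : ℕ) (x : Fin m → X) (H : Set (X → ℝ)) : ℝ :=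
  (1 / 2 ^ m) *
    ∑ σ : Fin m → Bool,
      sSup ((fun h : X → ℝ =>
        (1 / m : ℝ) * ∑ i, (if σ i then (1 : ℝ) else -1) * h (x i)) '' H)

open Function Bornology
open scoped NNReal

theorem Real.iSup_add_iSup_le {T : Type*} [Nonempty T] {f g : T → ℝ} {a : ℝ}
    (h : ∀ s t, f s + g t ≤ a) : (⨆ s, f s) + ⨆ t, g t ≤ a :=
  le_sub_iff_add_le.1 <| ciSup_le fun s => le_sub_iff_add_le.2 <|
    le_sub_iff_add_le'.1 <| ciSup_le fun t => le_sub_iff_add_le'.2 (h s t)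

theorem iSup_add_iSup_le_of_lipschitzWith {T : Type*} {ψ : ℝ → ℝ} {K : ℝ≥0}
    (hψ : LipschitzWith K ψ) (u v : T → ℝ) (c : ℝ)
    (hadd : BddAbove (Set.range fun t => u t + c * (K * v t)))
    (hsub : BddAbove (Set.range fun t => u t - c * (K * v t))) :
    (⨆ t, u t + c * ψ (v t)) + (⨆ t, u t - c * ψ (v t)) ≤
      (⨆ t, u t + c * (K * v t)) + ⨆ t, u t - c * (K * v t) := by
  cases isEmpty_or_nonempty T
  · simp
  refine Real.iSup_add_iSup_le fun s t => ?_
  have hψst : c * ψ (v s) - c * ψ (v t) ≤ |c * (K * v s) - c * (K * v t)| :=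
    calc c * ψ (v s) - c * ψ (v t) ≤ |c| * |ψ (v s) - ψ (v t)| := by
          rw [← abs_mul, mul_sub]; exact le_abs_self _
      _ ≤ |c| * (K * |v s - v t|) := by
          gcongr; simpa only [Real.dist_eq] using hψ.dist_le_mul (v s) (v t)
      _ = |c * (K * v s) - c * (K * v t)| := by
          rw [← mul_sub, ← mul_sub, abs_mul, abs_mul, NNReal.abs_eq]
  rcases abs_cases (c * (K * v s) - c * (K * v t)) with ⟨habs, -⟩ | ⟨habs, -⟩ <;>
    linarith [le_ciSup hadd s, le_ciSup hadd t, le_ciSup hsub s, le_ciSup hsub t]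

theorem lipschitzWith_const_mul (K : ℝ≥0) : LipschitzWith K fun x : ℝ => K * x :=
  LipschitzWith.of_dist_le_mul fun x y => by simp [Real.dist_eq, ← mul_sub, abs_mul]

theorem lipschitzWith_piecewise_comp {ι : Type*} [Fintype ι] (S : Finset ι) [DecidablePred (· ∈ S)]
    {φ ψ : ℝ → ℝ} {K : ℝ≥0} (hφ : LipschitzWith K φ) (hψ : LipschitzWith K ψ) :
    LipschitzWith K fun a : ι → ℝ => S.piecewise (fun i => ψ (a i)) fun i => φ (a i) := by
  refine LipschitzWith.of_dist_le_mul fun a b => (dist_pi_le_iff (by positivity)).2 fun i => ?_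
  have hab := mul_le_mul_of_nonneg_left (dist_le_pi_dist a b i) K.2
  by_cases hi : i ∈ S
  · simpa [hi] using (hψ.dist_le_mul (a i) (b i)).trans hab
  · simpa [hi] using (hφ.dist_le_mul (a i) (b i)).trans hab

namespace Rademacher

variable {ι T : Type*} [Fintype ι]

def sign (b : Bool) : ℝ := if b then 1 else -1

@[simp]
theorem sign_not (b : Bool) : sign (!b) = -sign b := by
  cases b <;> simp [sign]

noncomputable def signedSum (σ : ι → Bool) : (ι → ℝ) →L[ℝ] ℝ :=
  ∑ i, sign (σ i) • ContinuousLinearMap.proj i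

theorem signedSum_apply (σ : ι → Bool) (a : ι → ℝ) :
    signedSum σ a = ∑ i, sign (σ i) * a i := by
  simp [signedSum]

theorem signedSum_not (σ : ι → Bool) (a : ι → ℝ) :
    signedSum (fun i => !σ i) a = -signedSum σ a := by
  simp [signedSum_apply]

theorem bddAbove_range_signedSum {F : T → ι → ℝ} (hF : IsBounded (Set.range F)) (σ : ι → Bool) :
    BddAbove (Set.range fun t => signedSum σ (F t)) := by
  have := ((signedSum σ).lipschitz.isBounded_image hF).bddAbove
  rwa [← Set.range_comp] at this

variable [DecidableEq ι]

theorem signedSum_true_add_signedSum_eq (a : ι → ℝ) (k : ι) :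
    signedSum (fun _ => true) a + signedSum (fun i => decide (i = k)) a = 2 * a k := by
  rw [signedSum_apply, signedSum_apply, ← sum_add_distrib, sum_eq_single k]
  · simp [sign]; ring
  · intro i _ hi; simp [sign, hi]
  · simp

theorem signedSum_update (σ : ι → Bool) (a : ι → ℝ) (k : ι) (w : ℝ) :
    signedSum σ (update a k w) = ∑ i ∈ univ.erase k, sign (σ i) * a i + sign (σ k) * w := by
  rw [signedSum_apply, ← sum_erase_add _ _ (mem_univ k), update_self]
  congr 1
  exact sum_congr rfl fun i hi => by rw [update_of_ne (ne_of_mem_erase hi)]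

theorem signedSum_update_not_update (σ : ι → Bool) (a : ι → ℝ) (k : ι) (w : ℝ) :
    signedSum (update σ k (!σ k)) (update a k w) = signedSum σ (update a k (-w)) := by
  simp only [signedSum_apply]
  refine sum_congr rfl fun i _ => ?_
  rcases eq_or_ne i k with rfl | hi <;> simp [*]

theorem sum_comp_update_not {M : Type*} [AddCommMonoid M]
    (f : (ι → Bool) → M) (k : ι) : ∑ σ, f (update σ k (!σ k)) = ∑ σ, f σ := by
  have hflip : Involutive fun σ : ι → Bool => update σ k (!σ k) := fun σ => by simp
  exact Equiv.sum_comp (hflip.toPerm _) f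

noncomputable def rademacherSum (F : T → ι → ℝ) : ℝ :=
  ∑ σ : ι → Bool, ⨆ t, signedSum σ (F t)

theorem rademacherSum_update_le {ψ : ℝ → ℝ} {K : ℝ≥0} (hψ : LipschitzWith K ψ)
    (G : T → ι → ℝ) (v : T → ℝ) (k : ι)
    (hbdd : ∀ σ, BddAbove (Set.range fun t => signedSum σ (update (G t) k (K * v t)))) :
    rademacherSum (fun t => update (G t) k (ψ (v t))) ≤
      rademacherSum (fun t => update (G t) k (K * v t)) := by
  have two_mul_eq (F : T → ι → ℝ) : 2 * rademacherSum F = ∑ σ,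
      ((⨆ t, signedSum σ (F t)) + ⨆ t, signedSum (update σ k (!σ k)) (F t)) := by
    rw [sum_add_distrib, sum_comp_update_not (fun σ => ⨆ t, signedSum σ (F t)), rademacherSum]
    ring
  refine le_of_mul_le_mul_left ?_ two_pos
  rw [two_mul_eq, two_mul_eq]
  refine sum_le_sum fun σ _ => ?_
  have hadd := hbdd σ
  have hsub := hbdd (update σ k (!σ k))
  simp only [signedSum_update_not_update] at hsub ⊢
  simp only [signedSum_update, mul_neg, ← sub_eq_add_neg] at hadd hsub ⊢
  exact iSup_add_iSup_le_of_lipschitzWith hψ _ v _ hadd hsub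

theorem bddAbove_range_apply_of_bddAbove_signedSum {F : T → ι → ℝ}
    (h : ∀ σ, BddAbove (Set.range fun t => signedSum σ (F t))) (k : ι) :
    BddAbove (Set.range fun t => F t k) := by
  obtain ⟨M₁, hM₁⟩ := h fun _ => true
  obtain ⟨M₂, hM₂⟩ := h fun i => decide (i = k)
  refine ⟨(M₁ + M₂) / 2, Set.forall_mem_range.2 fun t => ?_⟩
  have := signedSum_true_add_signedSum_eq (F t) k
  linarith [hM₁ (Set.mem_range_self t), hM₂ (Set.mem_range_self t)]

theorem isBounded_range_of_bddAbove_signedSum {F : T → ι → ℝ}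
    (h : ∀ σ, BddAbove (Set.range fun t => signedSum σ (F t))) : IsBounded (Set.range F) := by
  have hneg (σ : ι → Bool) : BddAbove (Set.range fun t => signedSum σ (-F t)) := by
    simpa [signedSum_not] using h fun i => !σ i
  rw [isBounded_iff_bddBelow_bddAbove, bddBelow_pi, bddAbove_pi]
  refine ⟨fun k => ?_, fun k => ?_⟩
  · obtain ⟨M, hM⟩ := bddAbove_range_apply_of_bddAbove_signedSum hneg k
    refine ⟨-M, Set.forall_mem_image.2 fun a ⟨t, hta⟩ => ?_⟩
    have := hM (Set.mem_range_self t)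
    simp only [← hta, Pi.neg_apply, eval] at this ⊢
    linarith
  · rw [← Set.range_comp]
    exact bddAbove_range_apply_of_bddAbove_signedSum h k

theorem rademacherSum_const_mul {c : ℝ} (hc : 0 ≤ c) (F : T → ι → ℝ) :
    rademacherSum (fun t i => c * F t i) = c * rademacherSum F := by
  simp only [rademacherSum, mul_sum, Real.mul_iSup_of_nonneg hc]
  exact sum_congr rfl fun σ _ => iSup_congr fun t => (signedSum σ).map_smul c (F t)

theorem rademacherSum_piecewise_le_insert {F : T → ι → ℝ} (hF : IsBounded (Set.range F))
    {φ : ℝ → ℝ} {K : ℝ≥0} (hφ : LipschitzWith K φ) {S : Finset ι} {k : ι} (hk : k ∉ S) :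
    rademacherSum (fun t => S.piecewise (fun i => K * F t i) fun i => φ (F t i)) ≤
      rademacherSum (fun t => (insert k S).piecewise (fun i => K * F t i) fun i => φ (F t i)) := by
  have hS (t : T) : S.piecewise (fun i => K * F t i) (fun i => φ (F t i)) =
      update (S.piecewise (fun i => K * F t i) fun i => φ (F t i)) k (φ (F t k)) := by
    rw [← Finset.piecewise_eq_of_notMem S (fun i => K * F t i) (fun i => φ (F t i)) hk,
      update_eq_self]
  have hbdd := (lipschitzWith_piecewise_comp (insert k S) hφ
    (lipschitzWith_const_mul K)).isBounded_image hF
  rw [← Set.range_comp] at hbdd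
  replace hbdd := bddAbove_range_signedSum hbdd
  simp only [comp_apply, Finset.piecewise_insert] at hbdd
  simp only [Finset.piecewise_insert]
  conv_lhs => rw [funext hS]
  exact rademacherSum_update_le hφ _ (fun t => F t k) k hbdd

theorem rademacherSum_comp_le {F : T → ι → ℝ} (hF : IsBounded (Set.range F)) {φ : ℝ → ℝ} {K : ℝ≥0}
    (hφ : LipschitzWith K φ) : rademacherSum (fun t i => φ (F t i)) ≤ K * rademacherSum F := by
  have hmono (S : Finset ι) :
      rademacherSum (fun t i => φ (F t i)) ≤
        rademacherSum (fun t => S.piecewise (fun i => K * F t i) fun i => φ (F t i)) := by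
    induction S using Finset.induction_on with
    | empty => simp
    | insert k S hk ih => exact ih.trans (rademacherSum_piecewise_le_insert hF hφ hk)
  have := hmono univ
  simp only [Finset.piecewise_univ] at this
  rwa [rademacherSum_const_mul K.coe_nonneg] at this

end Rademacher

open Rademacher

theorem Rhat_image {X Y : Type*} (m : ℕ) (x : Fin m → X) (g : Y → X → ℝ) (s : Set Y) :
    Rhat m x (g '' s) =
      (2 ^ m)⁻¹ * ((m : ℝ)⁻¹ * rademacherSum fun y : s => fun i => g y (x i)) := by
  simp only [Rhat, rademacherSum, Set.image_image, sSup_image', mul_sum, one_div,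
    Real.mul_iSup_of_nonneg (inv_nonneg.2 (Nat.cast_nonneg m)), signedSum_apply]
  rfl

theorem isBounded_range_sample {X : Type*} {m : ℕ} {x : Fin m → X} {H : Set (X → ℝ)}
    (hbdd : ∀ σ : Fin m → Bool, BddAbove ((fun h : X → ℝ =>
      (1 / m : ℝ) * ∑ i, (if σ i then (1 : ℝ) else -1) * h (x i)) '' H)) :
    IsBounded (Set.range fun h : H => fun i => h.1 (x i)) := by
  rcases m.eq_zero_or_pos with rfl | hm
  · exact (Set.toFinite _).isBounded
  refine isBounded_range_of_bddAbove_signedSum fun σ => ?_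
  obtain ⟨M, hM⟩ := hbdd σ
  refine ⟨m * M, Set.forall_mem_range.2 fun h => ?_⟩
  have := hM ⟨h.1, h.2, rfl⟩
  rw [signedSum_apply]
  rwa [one_div, inv_mul_le_iff₀ (by positivity)] at this

theorem rademacher_contraction_general
    {X : Type*} (m : ℕ) (x : Fin m → X) (H : Set (X → ℝ)) (Φ : ℝ → ℝ) (l : ℝ)
    (hΦ : ∀ a b : ℝ, |Φ a - Φ b| ≤ l * |a - b|)
    (hbdd : ∀ σ : Fin m → Bool, BddAbove ((fun h : X → ℝ =>
      (1 / m : ℝ) * ∑ i, (if σ i then (1 : ℝ) else -1) * h (x i)) '' H)) :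
    Rhat m x ((fun h : X → ℝ => Φ ∘ h) '' H) ≤ l * Rhat m x H := by
  have hl : 0 ≤ l := (abs_nonneg _).trans (by simpa using hΦ 1 0)
  have hΦK : LipschitzWith ⟨l, hl⟩ Φ :=
    LipschitzWith.of_dist_le_mul fun a b => by rw [Real.dist_eq, Real.dist_eq]; exact hΦ a b
  have hcontr := rademacherSum_comp_le (isBounded_range_sample hbdd) hΦK
  have hH := Rhat_image m x id H
  simp only [id, Set.image_id'] at hH
  rw [Rhat_image, hH, mul_left_comm l, mul_left_comm l]
  gcongr
  exact hcontr

theorem rademacher_contraction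
    {X : Type*} (m : ℕ) (x : Fin m → X) (H : Set (X → ℝ)) (Φ : ℝ → ℝ) (l : ℝ)
    (hΦ : ∀ a b : ℝ, |Φ a - Φ b| ≤ l * |a - b|)
    (hH : H.Nonempty)
    (hbdd : ∀ σ : Fin m → Bool, BddAbove ((fun h : X → ℝ =>
      (1 / m : ℝ) * ∑ i, (if σ i then (1 : ℝ) else -1) * h (x i)) '' H))
    (hbddΦ : ∀ σ : Fin m → Bool, BddAbove ((fun h : X → ℝ =>
      (1 / m : ℝ) * ∑ i, (if σ i then (1 : ℝ) else -1) * Φ (h (x i))) '' H)) :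
    Rhat m x ((fun h : X → ℝ => Φ ∘ h) '' H) ≤ l * Rhat m x H :=
  rademacher_contraction_general m x H Φ l hΦ hbdd
end

section
/- Let Φ₁,...,Φ_m : ℝ → ℝ each be l-Lipschitz, let σ₁,...,σ_m be independent Rademacher random variables, and let H be a set of real-valued functions on X with sample points x₁,...,x_m. Then (1/m)·E_σ[ sup_{h∈H} Σᵢ σᵢ Φᵢ(h(xᵢ)) ] ≤ (l/m)·E_σ[ sup_{h∈H} Σᵢ σᵢ h(xᵢ) ]. -/
/-!
Replace `h ↦ Φᵢ (h xᵢ)` by `h ↦ l · h xᵢ` one coordinate `j` at a time. Pairing each sign vector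
with the one flipped at `j`, the two signed sums are `a + f` and `a - f` for a common remainder `a`,
where `f` is contracted by `g = l · (· xⱼ)`, i.e. `f y - f z ≤ |g y - g z|`. For `y, z ∈ H`,
`(a y + f y) + (a z - f z) ≤ a y + a z + |g y - g z|`, which is one of `(a y + g y) + (a z - g z)`
and `(a z + g z) + (a y - g y)`; hence `sup (a + f) + sup (a - f) ≤ sup (a + g) + sup (a - g)`.
The same estimate shows that `a ± f` is bounded above once `a ± g` is.
-/

open Finset Function
open scoped Pointwise

namespace TalagrandContraction

variable {ι Y : Type*} {H : Set Y}

lemma sSup_image_add_sSup_image_le (hH : H.Nonempty) {p q : Y → ℝ} {C : ℝ}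
    (h : ∀ y ∈ H, ∀ z ∈ H, p y + q z ≤ C) : sSup (p '' H) + sSup (q '' H) ≤ C := by
  have hq : ∀ y ∈ H, sSup (q '' H) ≤ C - p y := fun y hy =>
    csSup_le (hH.image q) (Set.forall_mem_image.2 fun z hz => by linarith [h y hy z hz])
  have hp : sSup (p '' H) ≤ C - sSup (q '' H) :=
    csSup_le (hH.image p) (Set.forall_mem_image.2 fun y hy => by linarith [hq y hy])
  linarith

section Contraction

variable {a f g : Y → ℝ}

lemma bddAbove_image_add_of_contraction (hfg : ∀ y z, f y - f z ≤ |g y - g z|)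
    (h_add : BddAbove ((fun y => a y + g y) '' H)) (h_sub : BddAbove ((fun y => a y - g y) '' H)) :
    BddAbove ((fun y => a y + f y) '' H) := by
  rcases H.eq_empty_or_nonempty with rfl | ⟨z, hz⟩
  · simp
  obtain ⟨M_add, hM_add⟩ := h_add
  obtain ⟨M_sub, hM_sub⟩ := h_sub
  refine ⟨max (M_add - g z) (M_sub + g z) + f z, Set.forall_mem_image.2 fun y hy => ?_⟩
  have hy_add : a y + g y ≤ M_add := hM_add ⟨y, hy, rfl⟩
  have hy_sub : a y - g y ≤ M_sub := hM_sub ⟨y, hy, rfl⟩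
  have hyz := hfg y z
  have := le_max_left (M_add - g z) (M_sub + g z)
  have := le_max_right (M_add - g z) (M_sub + g z)
  show a y + f y ≤ _
  cases abs_cases (g y - g z) <;> linarith

lemma sSup_add_sSup_sub_le_of_contraction (hfg : ∀ y z, f y - f z ≤ |g y - g z|)
    (h_add : BddAbove ((fun y => a y + g y) '' H)) (h_sub : BddAbove ((fun y => a y - g y) '' H)) :
    sSup ((fun y => a y + f y) '' H) + sSup ((fun y => a y - f y) '' H)
      ≤ sSup ((fun y => a y + g y) '' H) + sSup ((fun y => a y - g y) '' H) := by
  rcases H.eq_empty_or_nonempty with rfl | hH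
  · simp
  refine sSup_image_add_sSup_image_le hH fun y hy z hz => ?_
  have hy_add : a y + g y ≤ _ := le_csSup h_add ⟨y, hy, rfl⟩
  have hz_add : a z + g z ≤ _ := le_csSup h_add ⟨z, hz, rfl⟩
  have hy_sub : a y - g y ≤ _ := le_csSup h_sub ⟨y, hy, rfl⟩
  have hz_sub : a z - g z ≤ _ := le_csSup h_sub ⟨z, hz, rfl⟩
  have hyz := hfg y z
  cases abs_cases (g y - g z) <;> linarith

end Contraction

def sign (b : Bool) : ℝ := if b then 1 else -1

lemma sign_not (b : Bool) : sign (!b) = -sign b := by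
  cases b <;> simp [sign]

lemma sign_mul_contraction {f g : Y → ℝ} (hfg : ∀ y z, f y - f z ≤ |g y - g z|) (b : Bool)
    (y z : Y) : sign b * f y - sign b * f z ≤ |sign b * g y - sign b * g z| := by
  cases b
  · simp only [sign, Bool.false_eq_true, if_false, neg_one_mul, neg_sub_neg]
    exact hfg z y
  · simpa [sign] using hfg y z

variable [Fintype ι]

def signedSum (w : ι → Y → ℝ) (σ : ι → Bool) (y : Y) : ℝ :=
  ∑ i, sign (σ i) * w i y

lemma image_signedSum_const_mul (c : ℝ) (w : ι → Y → ℝ) (σ : ι → Bool) :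
    signedSum (fun i y => c * w i y) σ '' H = c • (signedSum w σ '' H) := by
  rw [← Set.image_smul, Set.image_image]
  congr 1
  funext y
  simp only [signedSum, smul_eq_mul, mul_sum]
  exact sum_congr rfl fun i _ => by ring

variable [DecidableEq ι]

section Update

variable (w : ι → Y → ℝ) (j : ι) (f : Y → ℝ) (σ : ι → Bool)

lemma signedSum_update_update (b : Bool) :
    signedSum (update w j f) (update σ j b)
      = fun y => ∑ i ∈ univ.erase j, sign (σ i) * w i y + sign b * f y := by
  funext y
  rw [signedSum, ← add_sum_erase _ _ (mem_univ j), add_comm]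
  simp only [update_self]
  congr 1
  refine sum_congr rfl fun i hi => ?_
  rw [update_of_ne (ne_of_mem_erase hi), update_of_ne (ne_of_mem_erase hi)]

lemma signedSum_update :
    signedSum (update w j f) σ
      = fun y => ∑ i ∈ univ.erase j, sign (σ i) * w i y + sign (σ j) * f y := by
  simpa using signedSum_update_update w j f σ (σ j)

lemma signedSum_update_flip :
    signedSum (update w j f) (update σ j (!σ j))
      = fun y => ∑ i ∈ univ.erase j, sign (σ i) * w i y - sign (σ j) * f y := by
  simp only [signedSum_update_update, sign_not, neg_mul, ← sub_eq_add_neg]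

lemma signedSum_eq_update : signedSum w σ = signedSum (update w j (w j)) σ := by
  rw [update_eq_self]

variable {w j f}

lemma bddAbove_signedSum_update (hf : ∀ y z, f y - f z ≤ |w j y - w j z|)
    (hw : ∀ σ, BddAbove (signedSum w σ '' H)) (σ : ι → Bool) :
    BddAbove (signedSum (update w j f) σ '' H) := by
  have h_add := hw σ
  have h_sub := hw (update σ j (!σ j))
  rw [signedSum_eq_update w j, signedSum_update] at h_add
  rw [signedSum_eq_update w j, signedSum_update_flip] at h_sub
  rw [signedSum_update]
  exact bddAbove_image_add_of_contraction (sign_mul_contraction hf _) h_add h_sub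

lemma sSup_signedSum_update_add_flip_le (hf : ∀ y z, f y - f z ≤ |w j y - w j z|)
    (hw : ∀ σ, BddAbove (signedSum w σ '' H)) (σ : ι → Bool) :
    sSup (signedSum (update w j f) σ '' H)
        + sSup (signedSum (update w j f) (update σ j (!σ j)) '' H)
      ≤ sSup (signedSum w σ '' H) + sSup (signedSum w (update σ j (!σ j)) '' H) := by
  have h_add := hw σ
  have h_sub := hw (update σ j (!σ j))
  rw [signedSum_eq_update w j, signedSum_update] at h_add ⊢
  rw [signedSum_eq_update w j, signedSum_update_flip] at h_sub ⊢
  rw [signedSum_update, signedSum_update_flip]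
  exact sSup_add_sSup_sub_le_of_contraction (sign_mul_contraction hf _) h_add h_sub

lemma sum_sSup_signedSum_update_le (hf : ∀ y z, f y - f z ≤ |w j y - w j z|)
    (hw : ∀ σ, BddAbove (signedSum w σ '' H)) :
    ∑ σ, sSup (signedSum (update w j f) σ '' H) ≤ ∑ σ, sSup (signedSum w σ '' H) := by
  have hflip : Involutive fun σ : ι → Bool => update σ j (!σ j) := fun σ => by simp
  have pair : ∀ F : (ι → Bool) → ℝ, ∑ σ, (F σ + F (update σ j (!σ j))) = 2 * ∑ σ, F σ := by
    intro F
    rw [sum_add_distrib, show ∑ σ, F (update σ j (!σ j)) = ∑ σ, F σ from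
      Equiv.sum_comp (hflip.toPerm _) F]
    ring
  have := sum_le_sum fun σ (_ : σ ∈ univ) => sSup_signedSum_update_add_flip_le hf hw σ
  rw [pair fun σ => sSup (signedSum (update w j f) σ '' H),
    pair fun σ => sSup (signedSum w σ '' H)] at this
  linarith

end Update

theorem sum_sSup_signedSum_le_of_contraction {u v : ι → Y → ℝ}
    (huv : ∀ i y z, u i y - u i z ≤ |v i y - v i z|) (hv : ∀ σ, BddAbove (signedSum v σ '' H)) :
    ∑ σ, sSup (signedSum u σ '' H) ≤ ∑ σ, sSup (signedSum v σ '' H) := by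
  -- The hybrid sums are not assumed bounded, so boundedness is carried through the induction.
  let mix (t : Finset ι) : ι → Y → ℝ := fun i => if i ∈ t then u i else v i
  suffices ∀ t, (∀ σ, BddAbove (signedSum (mix t) σ '' H))
      ∧ ∑ σ, sSup (signedSum (mix t) σ '' H) ≤ ∑ σ, sSup (signedSum v σ '' H) by
    simpa [mix] using (this univ).2
  intro t
  induction t using Finset.induction_on with
  | empty => simpa [mix] using hv
  | insert j t hj ih =>
    have hmix : mix (insert j t) = update (mix t) j (u j) := by
      funext i
      by_cases hij : i = j
      · subst hij; simp [mix]
      · simp [mix, hij]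
    have hu : ∀ y z, u j y - u j z ≤ |mix t j y - mix t j z| := by simpa [mix, hj] using huv j
    rw [hmix]
    exact ⟨bddAbove_signedSum_update hu ih.1,
      (sum_sSup_signedSum_update_le hu ih.1).trans ih.2⟩

end TalagrandContraction

open TalagrandContraction

theorem talagrand_contraction_general
    {X : Type*} (m : ℕ) (x : Fin m → X) (H : Set (X → ℝ))
    (Φ : Fin m → ℝ → ℝ) (l : ℝ)
    (hΦ : ∀ i, ∀ a b : ℝ, |Φ i a - Φ i b| ≤ l * |a - b|)
    (hbdd : ∀ σ : Fin m → Bool, BddAbove ((fun h : X → ℝ =>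
      ∑ i, (if σ i then (1 : ℝ) else -1) * h (x i)) '' H)) :
    (1 / m : ℝ) * ((1 / 2 ^ m) * ∑ σ : Fin m → Bool,
        sSup ((fun h : X → ℝ =>
          ∑ i, (if σ i then (1 : ℝ) else -1) * Φ i (h (x i))) '' H))
      ≤ (l / m) * ((1 / 2 ^ m) * ∑ σ : Fin m → Bool,
        sSup ((fun h : X → ℝ =>
          ∑ i, (if σ i then (1 : ℝ) else -1) * h (x i)) '' H)) := by
  rcases Nat.eq_zero_or_pos m with rfl | hm
  · simp
  have hl : 0 ≤ l := (abs_nonneg _).trans (by simpa using hΦ ⟨0, hm⟩ 0 1)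
  have hcontr : ∀ i (h h' : X → ℝ), Φ i (h (x i)) - Φ i (h' (x i))
      ≤ |l * h (x i) - l * h' (x i)| := fun i h h' => by
    rw [← mul_sub, abs_mul, abs_of_nonneg hl]
    exact (le_abs_self _).trans (hΦ i _ _)
  have hmain := sum_sSup_signedSum_le_of_contraction (H := H) hcontr fun σ => by
    simp only [image_signedSum_const_mul]
    exact (hbdd σ).smul_of_nonneg hl
  simp only [image_signedSum_const_mul, Real.sSup_smul_of_nonneg hl, smul_eq_mul,
    ← mul_sum] at hmain
  have scale : ∀ A B : ℝ, A ≤ l * B → 1 / m * (1 / 2 ^ m * A) ≤ l / m * (1 / 2 ^ m * B) :=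
    fun A B h => calc
      1 / m * (1 / 2 ^ m * A) = 1 / m * (1 / 2 ^ m) * A := by ring
      _ ≤ 1 / m * (1 / 2 ^ m) * (l * B) := by gcongr
      _ = l / m * (1 / 2 ^ m * B) := by ring
  exact scale _ _ hmain

theorem talagrand_contraction
    {X : Type*} (m : ℕ) (x : Fin m → X) (H : Set (X → ℝ))
    (Φ : Fin m → ℝ → ℝ) (l : ℝ)
    (hΦ : ∀ i, ∀ a b : ℝ, |Φ i a - Φ i b| ≤ l * |a - b|)
    (hH : H.Nonempty)
    (hbdd : ∀ σ : Fin m → Bool, BddAbove ((fun h : X → ℝ =>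
      ∑ i, (if σ i then (1 : ℝ) else -1) * h (x i)) '' H))
    (hbddΦ : ∀ σ : Fin m → Bool, BddAbove ((fun h : X → ℝ =>
      ∑ i, (if σ i then (1 : ℝ) else -1) * Φ i (h (x i))) '' H)) :
    (1 / m : ℝ) * ((1 / 2 ^ m) * ∑ σ : Fin m → Bool,
        sSup ((fun h : X → ℝ =>
          ∑ i, (if σ i then (1 : ℝ) else -1) * Φ i (h (x i))) '' H))
      ≤ (l / m) * ((1 / 2 ^ m) * ∑ σ : Fin m → Bool,
        sSup ((fun h : X → ℝ =>
          ∑ i, (if σ i then (1 : ℝ) else -1) * h (x i)) '' H)) :=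
  talagrand_contraction_general m x H Φ l hΦ hbdd
end

section
/- Let H be a set of real-valued functions on X, fix a sample x₁,...,x_m, let u_{m-1}(h) = Σ_{i=1}^{m-1} σᵢ Φᵢ(h(xᵢ)) for fixed signs σ₁,...,σ_{m-1} ∈ {−1,1}, and let Φ_m be l-Lipschitz. Then E_{σ_m}[ sup_{h∈H} (u_{m-1}(h) + σ_m Φ_m(h(x_m))) ] ≤ E_{σ_m}[ sup_{h∈H} (u_{m-1}(h) + σ_m · l · h(x_m)) ], where σ_m is uniform on {−1, 1}. -/
theorem talagrand_single_step
    {X : Type*} (H : Set (X → ℝ)) (x : X) (u : (X → ℝ) → ℝ)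
    (Φ : ℝ → ℝ) (l : ℝ)
    (hΦ : ∀ a b : ℝ, |Φ a - Φ b| ≤ l * |a - b|)
    (hH : H.Nonempty)
    (hb1 : BddAbove ((fun h : X → ℝ => u h + Φ (h x)) '' H))
    (hb2 : BddAbove ((fun h : X → ℝ => u h - Φ (h x)) '' H))
    (hb3 : BddAbove ((fun h : X → ℝ => u h + l * h x) '' H))
    (hb4 : BddAbove ((fun h : X → ℝ => u h - l * h x) '' H)) :
    (sSup ((fun h : X → ℝ => u h + Φ (h x)) '' H)
        + sSup ((fun h : X → ℝ => u h - Φ (h x)) '' H)) / 2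
      ≤ (sSup ((fun h : X → ℝ => u h + l * h x) '' H)
        + sSup ((fun h : X → ℝ => u h - l * h x) '' H)) / 2 := by
  set S3 := sSup ((fun h : X → ℝ => u h + l * h x) '' H)
  set S4 := sSup ((fun h : X → ℝ => u h - l * h x) '' H)
  have key : ∀ h ∈ H, ∀ h' ∈ H,
      (u h + Φ (h x)) + (u h' - Φ (h' x)) ≤ S3 + S4 := by
    intro h hh h' hh'
    have l3 : ∀ g ∈ H, u g + l * g x ≤ S3 := fun g hg =>
      le_csSup hb3 ⟨g, hg, rfl⟩
    have l4 : ∀ g ∈ H, u g - l * g x ≤ S4 := fun g hg =>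
      le_csSup hb4 ⟨g, hg, rfl⟩
    have habs : Φ (h x) - Φ (h' x) ≤ l * |h x - h' x| :=
      (le_abs_self _).trans (hΦ _ _)
    rcases le_total (h' x) (h x) with hle | hle
    · have : Φ (h x) - Φ (h' x) ≤ l * (h x - h' x) := by
        rwa [abs_of_nonneg (by linarith)] at habs
      have := add_le_add (l3 h hh) (l4 h' hh')
      linarith
    · have : Φ (h x) - Φ (h' x) ≤ l * (h' x - h x) := by
        rwa [abs_of_nonpos (by linarith), neg_sub] at habs
      have := add_le_add (l3 h' hh') (l4 h hh)
      linarith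
  have main : sSup ((fun h : X → ℝ => u h + Φ (h x)) '' H)
      + sSup ((fun h : X → ℝ => u h - Φ (h x)) '' H) ≤ S3 + S4 := by
    rw [← sub_nonneg]
    have h1 : sSup ((fun h : X → ℝ => u h + Φ (h x)) '' H)
        ≤ S3 + S4 - sSup ((fun h : X → ℝ => u h - Φ (h x)) '' H) := by
      apply csSup_le (hH.image _)
      rintro _ ⟨h, hh, rfl⟩
      rw [le_sub_iff_add_le, add_comm, ← le_sub_iff_add_le]
      apply csSup_le (hH.image _)
      rintro _ ⟨h', hh', rfl⟩
      have := key h hh h' hh'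
      simp only
      linarith
    linarith
  linarith
end
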